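/- Let α be a type of atoms, let G be a ground program over α, let E ⊆ G be an embedding program for G, and let A be an answer set of E. Then the FLP reducts of G and of E with respect to A coincide: G^A = E^A. -/

import Mathlib

/-!
Every atom of an answer set `A` of `E` heads some rule of `E^A`: otherwise deleting it from `A`
would leave a smaller model of `E^A`. So the positive body of any rule of `G^A` is covered by
heads of `E`, i.e. `E` body-embeds it, and the embedding property puts the rule in `E`.
-/

structure GroundRule (α : Type*) where
  head : Set α
  posBody : Set α
  negBody : Set α

namespace GroundRule

variable {α : Type*}

def Heads (R : Set (GroundRule α)) : Set α := ⋃ r ∈ R, r.head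

/-- `R ⊢_b r`. -/
def BodyEmbeds (R : Set (GroundRule α)) (r : GroundRule α) : Prop :=
  ∀ a ∈ r.posBody, ∃ r' ∈ R, a ∈ r'.head

/-- `R ⊢ r`; head-embedding `R ⊢_h r` is membership `r ∈ R`. -/
def Embeds (R : Set (GroundRule α)) (r : GroundRule α) : Prop :=
  ¬ BodyEmbeds R r ∨ r ∈ R

def IsEmbeddingProgram (G E : Set (GroundRule α)) : Prop :=
  E ⊆ G ∧ ∀ r ∈ G, Embeds E r

def factRule (a : α) : GroundRule α := ⟨{a}, ∅, ∅⟩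

/-- The fact rules `{a. : a ∈ F}`. -/
def factRules (F : Set α) : Set (GroundRule α) := factRule '' F

/-- `Inst(P, S)`. -/
def Inst (P : Set (GroundRule α)) (S : Set α) : Set (GroundRule α) :=
  {r ∈ P | r.posBody ⊆ S}

def SatBody (I : Set α) (r : GroundRule α) : Prop :=
  r.posBody ⊆ I ∧ r.negBody ∩ I = ∅

def SatRule (I : Set α) (r : GroundRule α) : Prop :=
  ¬ SatBody I r ∨ (r.head ∩ I).Nonempty

def IsModel (I : Set α) (G : Set (GroundRule α)) : Prop :=
  ∀ r ∈ G, SatRule I r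

/-- The FLP reduct `G^I`. -/
def reduct (G : Set (GroundRule α)) (I : Set α) : Set (GroundRule α) :=
  {r ∈ G | SatBody I r}

def IsAnswerSet (G : Set (GroundRule α)) (A : Set α) : Prop :=
  IsModel A (reduct G A) ∧ ∀ B, B ⊂ A → ¬ IsModel B (reduct G A)

def AS (G : Set (GroundRule α)) : Set (Set α) := {A | IsAnswerSet G A}

theorem Heads_mono {R R' : Set (GroundRule α)} (h : R ⊆ R') : Heads R ⊆ Heads R' := by
  intro a ha
  simp only [Heads, Set.mem_iUnion, exists_prop] at ha ⊢
  obtain ⟨r, hr, har⟩ := ha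
  exact ⟨r, h hr, har⟩

def InstOp (P : Set (GroundRule α)) (F : Set α) :
    Set (GroundRule α) →o Set (GroundRule α) where
  toFun R := Inst P (Heads R ∪ F)
  monotone' := fun _ _ h _ hr =>
    ⟨hr.1, hr.2.trans (Set.union_subset_union_left F (Heads_mono h))⟩

/-- `Inst^∞(P, F)`. -/
def InstInf (P : Set (GroundRule α)) (F : Set α) : Set (GroundRule α) :=
  OrderHom.lfp (InstOp P F)

theorem mem_heads {R : Set (GroundRule α)} {a : α} : a ∈ Heads R ↔ ∃ r ∈ R, a ∈ r.head := by
  simp only [Heads, Set.mem_iUnion, exists_prop]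

theorem bodyEmbeds_iff_posBody_subset_heads {R : Set (GroundRule α)} {r : GroundRule α} :
    BodyEmbeds R r ↔ r.posBody ⊆ Heads R :=
  forall₂_congr fun _ _ => mem_heads.symm

theorem Embeds.mem_of_bodyEmbeds {R : Set (GroundRule α)} {r : GroundRule α} (h : Embeds R r)
    (hb : BodyEmbeds R r) : r ∈ R :=
  h.resolve_left (not_not_intro hb)

theorem reduct_subset (P : Set (GroundRule α)) (I : Set α) : reduct P I ⊆ P :=
  fun _ hr => hr.1

theorem reduct_mono {P Q : Set (GroundRule α)} (h : P ⊆ Q) (I : Set α) :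
    reduct P I ⊆ reduct Q I :=
  fun _ hr => ⟨h hr.1, hr.2⟩

/-- Every rule of `P^I` fires in `I`, so its head keeps an atom of `I` other than `a`. -/
theorem isModel_reduct_diff_singleton {P : Set (GroundRule α)} {I : Set α}
    (hI : IsModel I (reduct P I)) {a : α} (ha : a ∉ Heads (reduct P I)) :
    IsModel (I \ {a}) (reduct P I) := by
  intro r hr
  obtain ⟨x, hxr, hxI⟩ := (hI r hr).resolve_left (not_not_intro hr.2)
  have hxa : x ≠ a := by
    rintro rfl
    exact ha (mem_heads.2 ⟨r, hr, hxr⟩)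
  exact Or.inr ⟨x, hxr, hxI, hxa⟩

theorem IsAnswerSet.subset_heads_reduct {P : Set (GroundRule α)} {A : Set α}
    (hA : IsAnswerSet P A) : A ⊆ Heads (reduct P A) := by
  intro a haA
  by_contra ha
  exact hA.2 (A \ {a}) (Set.sdiff_singleton_ssubset.2 haA)
    (isModel_reduct_diff_singleton hA.1 ha)

end GroundRule

open GroundRule

/-- if `E` is an embedding program for `G` and `A` an answer set
of `E`, then `G^A = E^A`. -/
theorem reduct_eq_of_answerSet_of_embedding {α : Type*} (G E : Set (GroundRule α))
    (hE : IsEmbeddingProgram G E)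
    (A : Set α) (hA : IsAnswerSet E A) :
    reduct G A = reduct E A := by
  refine Set.Subset.antisymm ?_ (reduct_mono hE.1 A)
  rintro r ⟨hrG, hrA⟩
  have hheads : A ⊆ Heads E :=
    hA.subset_heads_reduct.trans (Heads_mono (reduct_subset E A))
  have hbody : BodyEmbeds E r :=
    bodyEmbeds_iff_posBody_subset_heads.2 (hrA.1.trans hheads)
  exact ⟨(hE.2 r hrG).mem_of_bodyEmbeds hbody, hrA⟩
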